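/- arXiv:2308.09648 — 5 statements merged into one kernel-verified Lean document; each statement's English description precedes it below -/
import Mathlib

section
/- Let p1, q1 be partitions of n1 and p2, q2 be partitions of n2. If p1 dominates q1 and p2 dominates q2 (in the dominance order), then the union p1 ⊔ p2 (merging the multisets of parts and reordering non-increasingly) dominates q1 ⊔ q2 as partitions of n1 + n2. -/
/-!
`sumLargest M t` is the largest sum of a submultiset of `M` with at most `t` elements: a
sorted prefix beats any other choice by an exchange argument. Hence the `t` largest parts of
`q1 + q2` split as `a` parts of `q1` and `b` parts of `q2` with `a + b ≤ t`; dominance bounds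
their sums by the `a` largest parts of `p1` and the `b` largest parts of `p2`, which together
form a submultiset of `p1 + p2` with at most `t` elements.
-/

/-- Sum of the `t` largest elements of a multiset of naturals. -/
def sumLargest (M : Multiset ℕ) (t : ℕ) : ℕ := (((M.sort (· ≤ ·)).reverse).take t).sum

/-- Dominance order: for every `t`, the sum of the `t` largest parts of `M` is at least
that of `N`. -/
def Dom (M N : Multiset ℕ) : Prop := ∀ t, sumLargest N t ≤ sumLargest M t

theorem List.sum_le_sum_take_of_subperm {L S : List ℕ} {t : ℕ} (hL : L.Pairwise (· ≥ ·))
    (hS : S.Subperm L) (ht : S.length ≤ t) : S.sum ≤ (L.take t).sum := by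
  induction L generalizing S t with
  | nil => simp [List.subperm_nil.1 hS]
  | cons x L ih =>
    obtain ⟨hx, hL⟩ := List.pairwise_cons.1 hL
    obtain _ | t := t
    · simp [List.length_eq_zero_iff.1 (Nat.le_zero.1 ht)]
    have hSL : (S.erase x).Subperm L := by simpa using hS.erase x
    by_cases hxS : x ∈ S
    · calc S.sum = x + (S.erase x).sum := (List.perm_cons_erase hxS).sum_eq
        _ ≤ x + (L.take t).sum :=
          Nat.add_le_add_left (ih hL hSL (by rw [List.length_erase_of_mem hxS]; omega)) x
    · rw [List.erase_of_not_mem hxS] at hSL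
      obtain _ | ⟨a, S⟩ := S
      · simp
      -- when the head `x` is not taken, any element of `S` can be traded for it
      have ha : a ≤ x := hx a (hSL.subset List.mem_cons_self)
      have hS' : S.Subperm L := (List.sublist_cons_self a S).subperm.trans hSL
      simpa using Nat.add_le_add ha (ih hL hS' (by simpa using ht))

theorem sum_le_sumLargest {S M : Multiset ℕ} {t : ℕ} (hSM : S ≤ M) (ht : S.card ≤ t) :
    S.sum ≤ sumLargest M t := by
  induction S using Quotient.inductionOn with
  | h S =>
    refine List.sum_le_sum_take_of_subperm (List.pairwise_reverse.2 (Multiset.pairwise_sort _ _))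
      ?_ ht
    rw [← Multiset.coe_le, Multiset.coe_reverse, Multiset.sort_eq]
    exact hSM

theorem exists_le_sumLargest_eq_sum (M : Multiset ℕ) (t : ℕ) :
    ∃ S ≤ M, S.card ≤ t ∧ sumLargest M t = S.sum := by
  refine ⟨((M.sort (· ≤ ·)).reverse.take t : List ℕ), ?_, by simp, rfl⟩
  calc (((M.sort (· ≤ ·)).reverse.take t : List ℕ) : Multiset ℕ)
      ≤ ((M.sort (· ≤ ·)).reverse : List ℕ) := Multiset.coe_le.2 (List.take_sublist _ _).subperm
    _ = M := by rw [Multiset.coe_reverse, Multiset.sort_eq]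

theorem sumLargest_mono (M : Multiset ℕ) : Monotone (sumLargest M) := by
  intro a b hab
  obtain ⟨S, hSM, hS, hSsum⟩ := exists_le_sumLargest_eq_sum M a
  rw [hSsum]
  exact sum_le_sumLargest hSM (hS.trans hab)

theorem Multiset.exists_le_le_eq_add_of_le_add {α : Type*} [DecidableEq α] {W M N : Multiset α}
    (h : W ≤ M + N) : ∃ S ≤ M, ∃ T ≤ N, W = S + T :=
  ⟨W ∩ M, Multiset.inter_le_right, W - M, by rwa [Multiset.sub_le_iff_le_add, add_comm],
    by rw [add_comm, Multiset.sub_add_inter]⟩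

theorem exists_sumLargest_add_le (M N : Multiset ℕ) (t : ℕ) :
    ∃ a b, a + b ≤ t ∧ sumLargest (M + N) t ≤ sumLargest M a + sumLargest N b := by
  obtain ⟨W, hW, hWt, hWsum⟩ := exists_le_sumLargest_eq_sum (M + N) t
  obtain ⟨S, hS, T, hT, rfl⟩ := Multiset.exists_le_le_eq_add_of_le_add hW
  refine ⟨S.card, T.card, by simpa using hWt, ?_⟩
  rw [hWsum, Multiset.sum_add]
  exact Nat.add_le_add (sum_le_sumLargest hS le_rfl) (sum_le_sumLargest hT le_rfl)

theorem sumLargest_add_sumLargest_le (M N : Multiset ℕ) (a b : ℕ) :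
    sumLargest M a + sumLargest N b ≤ sumLargest (M + N) (a + b) := by
  obtain ⟨S, hS, hSa, hSsum⟩ := exists_le_sumLargest_eq_sum M a
  obtain ⟨T, hT, hTb, hTsum⟩ := exists_le_sumLargest_eq_sum N b
  rw [hSsum, hTsum, ← Multiset.sum_add]
  exact sum_le_sumLargest (add_le_add hS hT) (by simpa using Nat.add_le_add hSa hTb)

theorem stmt_1_general (p1 q1 p2 q2 : Multiset ℕ)
    (h1 : Dom p1 q1) (h2 : Dom p2 q2) : Dom (p1 + p2) (q1 + q2) := by
  intro t
  obtain ⟨a, b, hab, hsplit⟩ := exists_sumLargest_add_le q1 q2 t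
  calc sumLargest (q1 + q2) t ≤ sumLargest q1 a + sumLargest q2 b := hsplit
    _ ≤ sumLargest p1 a + sumLargest p2 b := Nat.add_le_add (h1 a) (h2 b)
    _ ≤ sumLargest (p1 + p2) (a + b) := sumLargest_add_sumLargest_le p1 p2 a b
    _ ≤ sumLargest (p1 + p2) t := sumLargest_mono _ hab

/-- if `p1` dominates `q1` (partitions of `n1`) and `p2` dominates `q2`
(partitions of `n2`), then the union `p1 ⊔ p2` dominates `q1 ⊔ q2` (partitions of `n1+n2`).
Partitions are multisets of positive parts; the union merges the multisets of parts. -/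
theorem stmt_1 (n1 n2 : ℕ) (p1 q1 p2 q2 : Multiset ℕ)
    (hp1' : 0 ∉ p1) (hq1' : 0 ∉ q1) (hp2' : 0 ∉ p2) (hq2' : 0 ∉ q2)
    (hp1 : p1.sum = n1) (hq1 : q1.sum = n1) (hp2 : p2.sum = n2) (hq2 : q2.sum = n2)
    (h1 : Dom p1 q1) (h2 : Dom p2 q2) : Dom (p1 + p2) (q1 + q2) :=
  stmt_1_general p1 q1 p2 q2 h1 h2
end

section
/- Fix ε ∈ {+1, −1} and define a partition p = [p_1^{r_1},...,p_N^{r_N}] of n (with p_i distinct and r_i the multiplicity of p_i) to be of type ε if r_i is even whenever (−1)^{p_i} = ε. Then for every partition p of n such that the set of type-ε partitions of n dominated by p is nonempty, this set has a unique maximal element with respect to the dominance order (the ε-collapse of p). -/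
/-- A partition (multiset of parts) is of type `ε` if every part `m` with `(-1)^m = ε`
occurs with even multiplicity. -/
def IsTypeEps (ε : ℤ) (M : Multiset ℕ) : Prop :=
  ∀ m : ℕ, ((-1 : ℤ) ^ m = ε) → Even (M.count m)

namespace PartitionCollapse

def incr (f : ℕ → ℕ) (t : ℕ) : ℕ := f (t + 1) - f t

/-- `f t` is the sum of the `t` largest parts of a partition of `n`. -/
structure IsPartSumFn (n : ℕ) (f : ℕ → ℕ) : Prop where
  map_zero : f 0 = 0
  monotone : Monotone f
  concave : ∀ t, f (t + 2) + f t ≤ 2 * f (t + 1)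
  le : ∀ t, f t ≤ n
  map_n : f n = n

/-- A corner is the end of a block of equal parts; at `t = 0` the truncated `t - 1` makes
this false for a partial-sum function. -/
def IsCorner (f : ℕ → ℕ) (t : ℕ) : Prop := f (t - 1) + f (t + 1) < 2 * f t

def CornerParity (e : ℕ) (f : ℕ → ℕ) : Prop := ∀ t, IsCorner f t → Even (f t + e * t)

def typedBelow (n e : ℕ) (f : ℕ → ℕ) : Set (ℕ → ℕ) :=
  {g | IsPartSumFn n g ∧ CornerParity e g ∧ g ≤ f}

/-- Lowering `f` by one on `[a, b]` moves a box from part `a` to part `b + 1` (counting parts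
from `1`). -/
def lowerOn (f : ℕ → ℕ) (a b t : ℕ) : ℕ := if a ≤ t ∧ t ≤ b then f t - 1 else f t

lemma add_incr_of_monotone {f : ℕ → ℕ} (hf : Monotone f) (t : ℕ) : f t + incr f t = f (t + 1) :=
  Nat.add_sub_of_le (hf t.le_succ)

lemma add_mul_eq_of_incr_eq {f : ℕ → ℕ} (hf : Monotone f) {a b s : ℕ} (hab : a ≤ b)
    (hs : ∀ u, a ≤ u → u < b → incr f u = s) (e : ℕ) :
    f b + e * b = f a + e * a + (b - a) * (s + e) := by
  induction b, hab using Nat.le_induction with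
  | base => simp
  | succ b hab ih =>
    have hb := add_incr_of_monotone hf b
    rw [hs b hab b.lt_succ_self] at hb
    rw [← hb, Nat.sub_add_comm hab]
    linear_combination ih fun u h1 h2 => hs u h1 (by omega)

section

variable {n a b : ℕ} {f g : ℕ → ℕ}

lemma lowerOn_le : lowerOn f a b ≤ f := fun t => by
  show lowerOn f a b t ≤ f t
  unfold lowerOn
  split_ifs <;> omega

lemma le_lowerOn (hgf : g ≤ f) (hlt : ∀ t, a ≤ t → t ≤ b → g t < f t) : g ≤ lowerOn f a b :=
  fun t => by
    have : g t ≤ f t := hgf t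
    show g t ≤ lowerOn f a b t
    unfold lowerOn
    split_ifs with h
    · have := hlt t h.1 h.2
      omega
    · assumption

namespace IsPartSumFn

variable (hf : IsPartSumFn n f)
include hf

lemma add_incr (t : ℕ) : f t + incr f t = f (t + 1) := add_incr_of_monotone hf.monotone t

lemma incr_antitone : Antitone (incr f) := by
  refine antitone_nat_of_succ_le fun t => ?_
  have := hf.concave t
  have := hf.add_incr t
  have : f (t + 1) + incr f (t + 1) = f (t + 2) := hf.add_incr (t + 1)
  omega

lemma eq_of_le {t : ℕ} (ht : n ≤ t) : f t = n :=
  le_antisymm (hf.le t) (hf.map_n ▸ hf.monotone ht)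

lemma isCorner_succ_iff (t : ℕ) : IsCorner f (t + 1) ↔ incr f (t + 1) < incr f t := by
  have := hf.add_incr t
  have := hf.add_incr (t + 1)
  unfold IsCorner
  simp only [Nat.add_sub_cancel]
  omega

end IsPartSumFn

lemma IsCorner.pos (hf : IsPartSumFn n f) {t : ℕ} (ht : IsCorner f t) : 0 < t := by
  rcases t with _ | t
  · have := hf.monotone (Nat.zero_le 1)
    simp only [IsCorner, hf.map_zero] at ht
    omega
  · omega

lemma IsCorner.le (hf : IsPartSumFn n f) {t : ℕ} (ht : IsCorner f t) : t ≤ n := by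
  by_contra! h
  have := hf.eq_of_le (t := t - 1) (by omega)
  have := hf.eq_of_le (t := t) h.le
  have := hf.eq_of_le (t := t + 1) (by omega)
  unfold IsCorner at ht
  omega

lemma isPartSumFn_lowerOn (hf : IsPartSumFn n f) (ha : IsCorner f a) (hb : IsCorner f b)
    (hab : a ≤ b) (hdrop : a = b → incr f a + 2 ≤ incr f (a - 1)) (hbn : b < n) :
    IsPartSumFn n (lowerOn f a b) := by
  have ha0 := ha.pos hf
  have hjump : f (a - 1) + 1 ≤ f a := by
    have := hf.monotone (Nat.sub_le a 1)
    have := hf.monotone (Nat.le_add_right a 1)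
    unfold IsCorner at ha
    omega
  have hpos : ∀ t, a ≤ t → 1 ≤ f t := fun t hat => by
    have := hf.monotone hat
    omega
  refine ⟨?_, ?_, fun t => ?_, fun t => (lowerOn_le t).trans (hf.le t), ?_⟩
  · simp [lowerOn, hf.map_zero]
  · refine monotone_nat_of_le_succ fun t => ?_
    have := hf.monotone (Nat.le_add_right t 1)
    unfold lowerOn
    by_cases hta : t + 1 = a
    · subst hta
      simp only [Nat.add_sub_cancel] at hjump
      split_ifs <;> omega
    · have := hpos t
      have := hpos (t + 1)
      split_ifs <;> omega
  · have hc := hf.concave t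
    have := hpos t
    have := hpos (t + 1)
    have := hpos (t + 2)
    unfold lowerOn
    by_cases hta : t + 1 = a
    · subst hta
      have ha' : f t + f (t + 2) < 2 * f (t + 1) := ha
      by_cases htb : t + 1 = b
      · subst htb
        have : f (t + 2) - f (t + 1) + 2 ≤ f (t + 1) - f t := hdrop rfl
        split_ifs <;> omega
      · split_ifs <;> omega
    · by_cases htb : t + 1 = b
      · subst htb
        have hb' : f t + f (t + 2) < 2 * f (t + 1) := hb
        split_ifs <;> omega
      · split_ifs <;> omega
  · simp [lowerOn, hf.map_n, hbn.not_ge]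

end

namespace IsPartSumFn

variable {n e : ℕ} {f : ℕ → ℕ} (hf : IsPartSumFn n f)
include hf

lemma exists_blockStart (t : ℕ) :
    ∃ a ≤ t, (a = 0 ∨ IsCorner f a) ∧ ∀ u, a ≤ u → u ≤ t → incr f u = incr f t := by
  classical
  have hex : ∃ a, incr f a = incr f t := ⟨t, rfl⟩
  refine ⟨Nat.find hex, Nat.find_min' hex rfl, ?_, fun u hau hut => ?_⟩
  · rcases h : Nat.find hex with _ | a
    · exact .inl rfl
    · refine .inr ((hf.isCorner_succ_iff a).2 (lt_of_le_of_ne ?_ fun he => ?_))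
      · exact hf.incr_antitone (Nat.le_succ a)
      · have hspec := Nat.find_spec hex
        rw [h] at hspec
        exact Nat.find_min hex (m := a) (by omega) (he.symm.trans hspec)
  · exact le_antisymm (Nat.find_spec hex ▸ hf.incr_antitone hau) (hf.incr_antitone hut)

lemma odd_incr_pred {t₀ : ℕ} (hc : IsCorner f t₀) (hodd : ¬ Even (f t₀ + e * t₀))
    (hmin : ∀ u < t₀, IsCorner f u → Even (f u + e * u)) : Odd (incr f (t₀ - 1) + e) := by
  have ht₀ := hc.pos hf
  obtain ⟨a, hat, ha, hconst⟩ := hf.exists_blockStart (t₀ - 1)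
  have hshift := add_mul_eq_of_incr_eq hf.monotone (b := t₀) (by omega)
    (fun u h1 h2 => hconst u h1 (by omega)) e
  have heven : Even (f a + e * a) := by
    rcases ha with rfl | ha
    · simp [hf.map_zero]
    · exact hmin a (by omega) ha
  rw [hshift, Nat.even_add] at hodd
  have : ¬ Even ((t₀ - a) * (incr f (t₀ - 1) + e)) := fun h => hodd (iff_of_true heven h)
  exact (Nat.odd_mul.1 (Nat.not_even_iff_odd.1 this)).2

/-- Where `g` first touches `f` on `[a, b]` it has a corner, of the wrong parity. -/
lemma lt_of_not_even_on {a b : ℕ} {g : ℕ → ℕ} (hg : CornerParity e g) (hgf : g ≤ f)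
    (ha : IsCorner f a) (hodd : ∀ t, a ≤ t → t ≤ b → ¬ Even (f t + e * t)) :
    ∀ t, a ≤ t → t ≤ b → g t < f t := by
  intro t hat
  induction t, hat using Nat.le_induction with
  | base =>
    intro hab
    refine lt_of_le_of_ne (hgf a) fun he => hodd a le_rfl hab ?_
    have hcorner : IsCorner g a := by
      have : g (a - 1) ≤ f (a - 1) := hgf (a - 1)
      have : g (a + 1) ≤ f (a + 1) := hgf (a + 1)
      unfold IsCorner at ha ⊢
      omega
    exact he ▸ hg a hcorner
  | succ t hat ih =>
    intro htb
    refine lt_of_le_of_ne (hgf (t + 1)) fun he => hodd (t + 1) (by omega) htb ?_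
    have hcorner : IsCorner g (t + 1) := by
      have := ih (by omega)
      have : g (t + 1 + 1) ≤ f (t + 2) := hgf (t + 2)
      have := hf.concave t
      unfold IsCorner
      simp only [Nat.add_sub_cancel]
      omega
    exact he ▸ hg _ hcorner

lemma not_even_on_of_incr_eq {a b : ℕ} (hodd : ¬ Even (f a + e * a)) (heven : Even (incr f a + e))
    (hconst : ∀ u, a ≤ u → u < b → incr f u = incr f a) :
    ∀ t, a ≤ t → t ≤ b → ¬ Even (f t + e * t) := fun t hat htb => by
  rw [add_mul_eq_of_incr_eq hf.monotone hat (fun u hau hut => hconst u hau (by omega)) e,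
    Nat.even_add]
  exact fun h => hodd (h.2 (heven.mul_left _))

lemma exists_lt_typedBelow_eq_of_not_even_on {a b : ℕ} (hne : (typedBelow n e f).Nonempty)
    (ha : IsCorner f a) (hb : IsCorner f b) (hab : a ≤ b)
    (hdrop : a = b → incr f a + 2 ≤ incr f (a - 1))
    (hodd : ∀ t, a ≤ t → t ≤ b → ¬ Even (f t + e * t)) :
    ∃ f', IsPartSumFn n f' ∧ f' < f ∧ typedBelow n e f' = typedBelow n e f := by
  have hlt : ∀ g ∈ typedBelow n e f, ∀ t, a ≤ t → t ≤ b → g t < f t :=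
    fun g hg => hf.lt_of_not_even_on hg.2.1 hg.2.2 ha hodd
  obtain ⟨g₀, hg₀⟩ := hne
  have hbn : b < n := by
    by_contra! hnb
    have := hlt g₀ hg₀ n (ha.le hf) hnb
    rw [hg₀.1.map_n, hf.map_n] at this
    exact lt_irrefl n this
  refine ⟨lowerOn f a b, isPartSumFn_lowerOn hf ha hb hab hdrop hbn,
    lt_of_le_of_ne lowerOn_le fun h => ?_, ?_⟩
  · have hfa := congrFun h a
    have := hlt g₀ hg₀ a le_rfl hab
    simp only [lowerOn, le_rfl, hab, and_self, if_true] at hfa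
    omega
  · ext g
    exact ⟨fun hg => ⟨hg.1, hg.2.1, hg.2.2.trans lowerOn_le⟩,
      fun hg => ⟨hg.1, hg.2.1, le_lowerOn hg.2.2 (hlt g hg)⟩⟩

lemma exists_lt_typedBelow_eq_of_even_incr {t₀ : ℕ} (hne : (typedBelow n e f).Nonempty)
    (hc : IsCorner f t₀) (hodd : ¬ Even (f t₀ + e * t₀)) (heven : Even (incr f t₀ + e)) :
    ∃ f', IsPartSumFn n f' ∧ f' < f ∧ typedBelow n e f' = typedBelow n e f := by
  classical
  by_cases hnext : ∃ u, incr f u < incr f t₀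
  · set t₁ := Nat.find hnext
    have hlt₁ : incr f t₁ < incr f t₀ := Nat.find_spec hnext
    have ht₀₁ : t₀ < t₁ := lt_of_not_ge fun h => (hf.incr_antitone h).not_gt hlt₁
    have hconst : ∀ u, t₀ ≤ u → u < t₁ → incr f u = incr f t₀ := fun u h₁ h₂ =>
      le_antisymm (hf.incr_antitone h₁) (not_lt.1 (Nat.find_min hnext h₂))
    have hc₁ : IsCorner f t₁ := by
      have := hf.isCorner_succ_iff (t₁ - 1)
      rw [Nat.sub_add_cancel (by omega), hconst (t₁ - 1) (by omega) (by omega)] at this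
      exact this.2 hlt₁
    exact hf.exists_lt_typedBelow_eq_of_not_even_on hne hc hc₁ ht₀₁.le (by omega)
      (hf.not_even_on_of_incr_eq hodd heven hconst)
  · simp only [not_exists, not_lt] at hnext
    obtain ⟨g₀, hg₀⟩ := hne
    have hodd' := hf.not_even_on_of_incr_eq hodd heven (b := n)
      fun u h₁ _ => le_antisymm (hf.incr_antitone h₁) (hnext u)
    have := hf.lt_of_not_even_on hg₀.2.1 hg₀.2.2 hc hodd' n (hc.le hf) le_rfl
    rw [hg₀.1.map_n, hf.map_n] at this
    exact absurd this (lt_irrefl n)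

lemma exists_lt_typedBelow_eq (hbad : ¬ CornerParity e f) (hne : (typedBelow n e f).Nonempty) :
    ∃ f', IsPartSumFn n f' ∧ f' < f ∧ typedBelow n e f' = typedBelow n e f := by
  classical
  have hex : ∃ t, IsCorner f t ∧ ¬ Even (f t + e * t) := by
    simpa [CornerParity] using hbad
  set t₀ := Nat.find hex
  obtain ⟨hc, hodd⟩ : IsCorner f t₀ ∧ ¬ Even (f t₀ + e * t₀) := Nat.find_spec hex
  have hmin : ∀ u < t₀, IsCorner f u → Even (f u + e * u) :=
    fun u hu hcu => not_not.1 fun h => Nat.find_min hex hu ⟨hcu, h⟩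
  have hs := hf.odd_incr_pred hc hodd hmin
  have hdec : incr f t₀ < incr f (t₀ - 1) := by
    have := hf.isCorner_succ_iff (t₀ - 1)
    rw [Nat.sub_add_cancel (hc.pos hf)] at this
    exact this.1 hc
  by_cases hdrop : incr f t₀ + 2 ≤ incr f (t₀ - 1)
  · refine hf.exists_lt_typedBelow_eq_of_not_even_on hne hc hc le_rfl (fun _ => hdrop) ?_
    intro t h₁ h₂
    obtain rfl : t = t₀ := le_antisymm h₂ h₁
    exact hodd
  -- The slope drops by exactly one at `t₀`, so `f t + e * t` stays odd up to the next corner.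
  refine hf.exists_lt_typedBelow_eq_of_even_incr hne hc hodd ?_
  rwa [show incr f (t₀ - 1) = incr f t₀ + 1 by omega, add_right_comm, Nat.odd_add_one,
    Nat.not_odd_iff_even] at hs

end IsPartSumFn

lemma sum_range_lt_of_lt {n : ℕ} {f g : ℕ → ℕ} (hf : IsPartSumFn n f) (hg : IsPartSumFn n g)
    (hgf : g < f) : ∑ t ∈ Finset.range (n + 1), g t < ∑ t ∈ Finset.range (n + 1), f t := by
  obtain ⟨hle, t, ht⟩ := Pi.lt_def.1 hgf
  have htn : t ≤ n := by
    by_contra! h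
    rw [hf.eq_of_le h.le, hg.eq_of_le h.le] at ht
    exact lt_irrefl n ht
  exact Finset.sum_lt_sum (fun u _ => hle u) ⟨t, Finset.mem_range.2 (by omega), ht⟩

theorem exists_isGreatest_typedBelow {n e : ℕ} {f : ℕ → ℕ} (hf : IsPartSumFn n f)
    (hne : (typedBelow n e f).Nonempty) : ∃ g, IsGreatest (typedBelow n e f) g := by
  induction hμ : ∑ t ∈ Finset.range (n + 1), f t using Nat.strong_induction_on generalizing f with
  | _ μ ih =>
    by_cases hpar : CornerParity e f
    · exact ⟨f, ⟨hf, hpar, le_rfl⟩, fun g hg => hg.2.2⟩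
    obtain ⟨f', hf', hlt, heq⟩ := hf.exists_lt_typedBelow_eq hpar hne
    rw [← heq] at hne ⊢
    exact ih _ (hμ ▸ sum_range_lt_of_lt hf hf' hlt) hf' hne rfl

def prefixSum (l : List ℕ) (t : ℕ) : ℕ := (l.take t).sum

lemma prefixSum_succ (l : List ℕ) (t : ℕ) : prefixSum l (t + 1) = prefixSum l t + l.getD t 0 := by
  rw [prefixSum, prefixSum, List.take_add_one, List.sum_append, List.getD_eq_getElem?_getD]
  cases l[t]? <;> simp

lemma incr_prefixSum (l : List ℕ) (t : ℕ) : incr (prefixSum l) t = l.getD t 0 := by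
  rw [incr, prefixSum_succ]
  omega

lemma sum_map_add_take (l : List ℕ) (e : ℕ) {t : ℕ} (ht : t ≤ l.length) :
    ((l.take t).map (· + e)).sum = prefixSum l t + e * t := by
  rw [List.sum_map_add, List.map_id', List.map_const', List.sum_replicate, List.length_take,
    min_eq_left ht, smul_eq_mul, mul_comm, prefixSum]

section

variable {l : List ℕ}

lemma prefixSum_of_length_le {t : ℕ} (h : l.length ≤ t) : prefixSum l t = l.sum := by
  rw [prefixSum, List.take_of_length_le h]

lemma isCorner_prefixSum_iff {t : ℕ} :
    IsCorner (prefixSum l) t ↔ 0 < t ∧ l.getD t 0 < l.getD (t - 1) 0 := by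
  rcases t with _ | t
  · simp [IsCorner, prefixSum]
  · have := prefixSum_succ l t
    have := prefixSum_succ l (t + 1)
    simp only [IsCorner, Nat.add_sub_cancel, Nat.zero_lt_succ, true_and]
    omega

lemma getD_antitone (hl : l.Pairwise (· ≥ ·)) : Antitone (l.getD · 0) := by
  intro a b hab
  show l.getD b 0 ≤ l.getD a 0
  rcases Nat.lt_or_ge b l.length with hb | hb
  · rw [List.getD_eq_getElem l 0 hb, List.getD_eq_getElem l 0 (hab.trans_lt hb)]
    rcases hab.lt_or_eq with h | rfl
    · exact List.pairwise_iff_getElem.1 hl a b (hab.trans_lt hb) hb h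
    · exact le_rfl
  · rw [List.getD_eq_default l 0 hb]
    exact Nat.zero_le _

lemma isPartSumFn_prefixSum (hl : l.Pairwise (· ≥ ·)) (h0 : 0 ∉ l) :
    IsPartSumFn l.sum (prefixSum l) where
  map_zero := rfl
  monotone := monotone_nat_of_le_succ fun t => by
    rw [prefixSum_succ]
    exact Nat.le_add_right _ _
  concave t := by
    have := prefixSum_succ l t
    have : prefixSum l (t + 2) = prefixSum l (t + 1) + l.getD (t + 1) 0 := prefixSum_succ l (t + 1)
    have : l.getD (t + 1) 0 ≤ l.getD t 0 := getD_antitone hl (Nat.le_succ t)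
    omega
  le t := by
    rw [prefixSum, ← List.sum_take_add_sum_drop l t]
    exact Nat.le_add_right _ _
  map_n := prefixSum_of_length_le (List.length_le_sum_of_one_le l fun x hx =>
    Nat.one_le_iff_ne_zero.2 fun h => h0 (h ▸ hx))

lemma filter_le_eq_take (hl : l.Pairwise (· ≥ ·)) {w t : ℕ} (h₁ : ∀ i < t, w ≤ l.getD i 0)
    (h₂ : t < l.length → l.getD t 0 < w) : l.filter (w ≤ ·) = l.take t := by
  conv_lhs => rw [← List.take_append_drop t l]
  rw [List.filter_append, List.filter_eq_self.2, List.filter_eq_nil_iff.2, List.append_nil]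
  · rintro _ hx
    obtain ⟨j, hj, rfl⟩ := List.mem_drop_iff_getElem.1 hx
    have : l.getD (t + j) 0 ≤ l.getD t 0 := getD_antitone hl (Nat.le_add_right t j)
    rw [List.getD_eq_getElem l 0 (by omega)] at this
    have := h₂ (by omega)
    simp only [decide_eq_true_eq, not_le]
    omega
  · rintro _ hx
    obtain ⟨j, hj, rfl⟩ := List.mem_take_iff_getElem.1 hx
    have := h₁ j (by omega)
    rw [List.getD_eq_getElem l 0 (by omega)] at this
    simpa using this

/-- Both sides describe the same parities: the parts `≥ w` are the first `t` parts for a corner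
(or zero) `t`, and every corner arises this way for `w` the part just before it. -/
lemma cornerParity_prefixSum_iff (hl : l.Pairwise (· ≥ ·)) (h0 : 0 ∉ l) (e : ℕ) :
    CornerParity e (prefixSum l) ↔ ∀ w, Even (((l.filter (w ≤ ·)).map (· + e)).sum) := by
  have hpos : ∀ i < l.length, 1 ≤ l.getD i 0 := fun i hi => by
    rw [List.getD_eq_getElem l 0 hi]
    exact Nat.one_le_iff_ne_zero.2 fun h => h0 (h ▸ List.getElem_mem hi)
  constructor
  · intro hpar w
    classical
    have hex : ∃ k, ¬ (k < l.length ∧ w ≤ l.getD k 0) := ⟨l.length, by simp⟩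
    set k := Nat.find hex
    have hk : ¬ (k < l.length ∧ w ≤ l.getD k 0) := Nat.find_spec hex
    have hbefore : ∀ i < k, i < l.length ∧ w ≤ l.getD i 0 :=
      fun i hi => not_not.1 (Nat.find_min hex hi)
    have hkl : k ≤ l.length := Nat.find_min' hex (by simp)
    rw [filter_le_eq_take hl (fun i hi => (hbefore i hi).2) (by omega),
      sum_map_add_take l e hkl]
    rcases Nat.eq_zero_or_pos k with hk0 | hk0
    · simp [hk0, prefixSum]
    refine hpar k (isCorner_prefixSum_iff.2 ⟨hk0, ?_⟩)
    have := hbefore (k - 1) (by omega)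
    have := hpos (k - 1) (by omega)
    rcases Nat.lt_or_ge k l.length with h | h
    · omega
    · rw [List.getD_eq_default l 0 h]
      omega
  · intro heven t hc
    obtain ⟨ht, hlt⟩ := isCorner_prefixSum_iff.1 hc
    have htl : t ≤ l.length := by
      by_contra! h
      rw [List.getD_eq_default l 0 (by omega : l.length ≤ t - 1)] at hlt
      omega
    have := heven (l.getD (t - 1) 0)
    rwa [filter_le_eq_take hl (fun i hi => getD_antitone hl (by omega)) fun _ => hlt,
      sum_map_add_take l e htl] at this

lemma ext_getD_of_zero_notMem {l₁ l₂ : List ℕ} (h₁ : 0 ∉ l₁) (h₂ : 0 ∉ l₂)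
    (h : ∀ i, l₁.getD i 0 = l₂.getD i 0) : l₁ = l₂ := by
  refine List.ext_getElem? fun i => ?_
  have := h i
  simp only [List.getD_eq_getElem?_getD] at this
  rcases hx : l₁[i]? with _ | x <;> rcases hy : l₂[i]? with _ | y <;>
    simp only [hx, hy, Option.getD_none, Option.getD_some] at this
  · rfl
  · exact absurd (this ▸ List.mem_of_getElem? hy) h₂
  · exact absurd (this ▸ List.mem_of_getElem? hx) h₁
  · rw [this]

end

lemma forall_even_count_iff (M : Multiset ℕ) (e : ℕ) :
    (∀ v, Odd (v + e) → Even (M.count v)) ↔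
      ∀ w, Even (((M.filter (w ≤ ·)).map (· + e)).sum) := by
  classical
  constructor
  · intro h w
    rw [Finset.sum_multiset_map_count]
    refine Finset.even_sum _ fun v _ => ?_
    rw [smul_eq_mul, Multiset.count_filter]
    rcases Nat.even_or_odd (v + e) with hv | hv
    · exact hv.mul_left _
    · split_ifs
      · exact (h v hv).mul_right _
      · simp
  · intro h v hv
    -- The threshold sums at `v` and `v + 1` differ by the contribution `count v * (v + e)`.
    have hsplit : M.filter (v ≤ ·) = M.filter (· = v) + M.filter (v + 1 ≤ ·) := by
      ext a
      simp only [Multiset.count_add, Multiset.count_filter]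
      split_ifs <;> omega
    have := h v
    rw [hsplit, Multiset.map_add, Multiset.sum_add, Multiset.filter_eq', Multiset.map_replicate,
      Multiset.sum_replicate, smul_eq_mul, Nat.even_add] at this
    exact (Nat.even_mul.1 (this.2 (h (v + 1)))).resolve_right (Nat.not_even_iff_odd.2 hv)

def sortedParts (M : Multiset ℕ) : List ℕ := (M.sort (· ≤ ·)).reverse

section

variable {n : ℕ} {M N : Multiset ℕ}

lemma pairwise_sortedParts (M : Multiset ℕ) : (sortedParts M).Pairwise (· ≥ ·) :=
  List.pairwise_reverse.2 (Multiset.pairwise_sort M (· ≤ ·))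

lemma coe_sortedParts (M : Multiset ℕ) : (sortedParts M : Multiset ℕ) = M := by
  rw [sortedParts, Multiset.coe_reverse, Multiset.sort_eq]

lemma sortedParts_coe {l : List ℕ} (hl : l.Pairwise (· ≥ ·)) : sortedParts l = l := by
  rw [sortedParts, List.reverse_eq_iff]
  refine List.Perm.eq_of_pairwise' (Multiset.pairwise_sort _ _) (List.pairwise_reverse.2 hl) ?_
  exact (Multiset.coe_eq_coe.1 (Multiset.sort_eq _ _)).trans (List.reverse_perm l).symm

lemma zero_notMem_sortedParts (h0 : 0 ∉ M) : 0 ∉ sortedParts M := fun h =>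
  h0 (coe_sortedParts M ▸ Multiset.mem_coe.2 h)

lemma isPartSumFn_sumLargest (h0 : 0 ∉ M) : IsPartSumFn M.sum (sumLargest M) := by
  have := isPartSumFn_prefixSum (pairwise_sortedParts M) (zero_notMem_sortedParts h0)
  rwa [← Multiset.sum_coe, coe_sortedParts] at this

lemma cornerParity_sumLargest_iff (h0 : 0 ∉ M) (e : ℕ) :
    CornerParity e (sumLargest M) ↔ ∀ v, Odd (v + e) → Even (M.count v) := by
  rw [forall_even_count_iff]
  conv_rhs => rw [← coe_sortedParts M]
  simp only [Multiset.filter_coe, Multiset.map_coe, Multiset.sum_coe]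
  exact cornerParity_prefixSum_iff (pairwise_sortedParts M) (zero_notMem_sortedParts h0) e

lemma exists_sumLargest_eq {g : ℕ → ℕ} (hg : IsPartSumFn n g) :
    ∃ q : Multiset ℕ, 0 ∉ q ∧ q.sum = n ∧ sumLargest q = g := by
  classical
  have hex : ∃ m, incr g m = 0 :=
    ⟨n, by rw [incr, hg.eq_of_le le_rfl, hg.eq_of_le n.le_succ, Nat.sub_self]⟩
  set m := Nat.find hex
  set l := (List.range m).map (incr g)
  have hl : l.Pairwise (· ≥ ·) :=
    List.pairwise_map.2 (List.pairwise_lt_range.imp fun h => hg.incr_antitone h.le)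
  have hgetD : ∀ t, l.getD t 0 = incr g t := fun t => by
    rcases Nat.lt_or_ge t m with h | h
    · simp [l, List.getD_eq_getElem?_getD, List.getElem?_range h]
    · rw [List.getD_eq_default _ 0 (by simpa [l] using h)]
      exact (Nat.eq_zero_of_le_zero (Nat.find_spec hex ▸ hg.incr_antitone h)).symm
  have hprefix : prefixSum l = g := funext fun t => by
    induction t with
    | zero => exact hg.map_zero.symm
    | succ t ih => rw [prefixSum_succ, ih, hgetD, hg.add_incr]
  refine ⟨l, fun h => ?_, ?_, by
    rw [show sumLargest l = prefixSum (sortedParts l) from rfl, sortedParts_coe hl, hprefix]⟩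
  · obtain ⟨u, hu, hu0⟩ := List.mem_map.1 (Multiset.mem_coe.1 h)
    exact Nat.find_min hex (List.mem_range.1 hu) hu0
  · have := hg.eq_of_le (le_max_left n l.length)
    rwa [← hprefix, prefixSum_of_length_le (le_max_right n l.length)] at this

lemma sumLargest_injOn (hM : 0 ∉ M) (hN : 0 ∉ N) (h : sumLargest M = sumLargest N) : M = N := by
  rw [← coe_sortedParts M, ← coe_sortedParts N,
    ext_getD_of_zero_notMem (zero_notMem_sortedParts hM) (zero_notMem_sortedParts hN) fun i => ?_]
  rw [← incr_prefixSum, ← incr_prefixSum]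
  exact congrArg (incr · i) h

end

/-- With `e = parityShift ε`, a part `m` is constrained by type `ε` exactly when `m + e` is odd. -/
def parityShift (ε : ℤ) : ℕ := if ε = 1 then 1 else 0

lemma isTypeEps_iff {ε : ℤ} (hε : ε = 1 ∨ ε = -1) (M : Multiset ℕ) :
    IsTypeEps ε M ↔ ∀ v, Odd (v + parityShift ε) → Even (M.count v) := by
  have hpow : ∀ m : ℕ, (-1 : ℤ) ^ m = ε ↔ Odd (m + parityShift ε) := by
    have hne : (-1 : ℤ) ≠ 1 := by decide
    rcases hε with rfl | rfl
    · simp [parityShift, Nat.odd_add_one, neg_one_pow_eq_one_iff_even hne]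
    · simp [parityShift, neg_one_pow_eq_neg_one_iff_odd hne]
  simp only [IsTypeEps, hpow]

lemma sumLargest_mem_typedBelow_iff {ε : ℤ} (hε : ε = 1 ∨ ε = -1) {n : ℕ} {p q : Multiset ℕ}
    (hq0 : 0 ∉ q) (hq : q.sum = n) :
    sumLargest q ∈ typedBelow n (parityShift ε) (sumLargest p) ↔ IsTypeEps ε q ∧ Dom p q := by
  rw [typedBelow, Set.mem_ofPred_eq, cornerParity_sumLargest_iff hq0, ← isTypeEps_iff hε, ← hq]
  exact and_iff_right (isPartSumFn_sumLargest hq0)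

end PartitionCollapse

open PartitionCollapse in
/-- for `ε ∈ {1, -1}`, if the set of type-`ε` partitions of `n` dominated by a
partition `p` of `n` is nonempty, then it has a unique maximal element for the dominance
order (the `ε`-collapse of `p`). -/
theorem stmt_6 (ε : ℤ) (hε : ε = 1 ∨ ε = -1) (n : ℕ) (p : Multiset ℕ)
    (hp : p.sum = n) (hp0 : 0 ∉ p)
    (hne : ∃ q : Multiset ℕ, q.sum = n ∧ 0 ∉ q ∧ IsTypeEps ε q ∧ Dom p q) :
    ∃! q : Multiset ℕ, (q.sum = n ∧ 0 ∉ q ∧ IsTypeEps ε q ∧ Dom p q) ∧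
      ∀ q' : Multiset ℕ, q'.sum = n → 0 ∉ q' → IsTypeEps ε q' → Dom p q' → Dom q q' := by
  have hmem : ∀ {q : Multiset ℕ}, 0 ∉ q → q.sum = n →
      (sumLargest q ∈ typedBelow n (parityShift ε) (sumLargest p) ↔ IsTypeEps ε q ∧ Dom p q) :=
    sumLargest_mem_typedBelow_iff hε
  obtain ⟨q₀, hq₀, hq₀0, hq₀type, hq₀dom⟩ := hne
  obtain ⟨g, hg, hgmax⟩ := exists_isGreatest_typedBelow (hp ▸ isPartSumFn_sumLargest hp0)
    ⟨_, (hmem hq₀0 hq₀).2 ⟨hq₀type, hq₀dom⟩⟩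
  obtain ⟨q, hq0, hq, rfl⟩ := exists_sumLargest_eq hg.1
  obtain ⟨hqtype, hqdom⟩ := (hmem hq0 hq).1 hg
  refine ⟨q, ⟨⟨hq, hq0, hqtype, hqdom⟩, fun q' h₁ h₂ h₃ h₄ => hgmax ((hmem h₂ h₁).2 ⟨h₃, h₄⟩)⟩, ?_⟩
  rintro q' ⟨⟨h₁, h₂, h₃, h₄⟩, hmax⟩
  exact sumLargest_injOn h₂ hq0
    (le_antisymm (hgmax ((hmem h₂ h₁).2 ⟨h₃, h₄⟩)) (hmax q hq hq0 hqtype hqdom))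
end

section
/- Define the Barbasch-Vogan duality on partitions of type D by d_BV(p) = (p*)_D, the D-collapse of the transpose. Then for any partition p of 2n of type D, d_BV(p) is again a partition of 2n of type D, and d_BV is order-reversing: if p ≥ q in the dominance order (both of type D), then d_BV(p) ≤ d_BV(q). -/
/-
Transposition reverses the dominance order: the `t`-th partial sum of `p*` is
`∑ⱼ min (pⱼ, t) = |p| - ∑ⱼ (pⱼ - t)⁺`, and `∑ⱼ (pⱼ - t)⁺` grows with `p` in dominance order,
since for antitone `q` it equals `psum q m - m t` where `m` is the number of parts exceeding `t`.
Hence `p ≥ q` gives `q* ≥ p* ≥ (p*)_D`, and maximality of `(q*)_D` among type D partitions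
dominated by `q*` yields `(q*)_D ≥ (p*)_D`.
-/

/-- `p` is a partition of `n`: the parts `p 0 ≥ p 1 ≥ ...` are non-increasing,
eventually zero, and sum to `n` (trailing zero padding). -/
def PartitionOf (n : ℕ) (p : ℕ → ℕ) : Prop :=
  Antitone p ∧ ∃ N, (∀ i, N ≤ i → p i = 0) ∧ ∑ i ∈ Finset.range N, p i = n

/-- Sum of the first `t` parts. -/
def psum (p : ℕ → ℕ) (t : ℕ) : ℕ := ∑ i ∈ Finset.range t, p i

/-- Dominance order: every partial sum of `p` is at least that of `q`. -/
def Dominates (p q : ℕ → ℕ) : Prop := ∀ t, psum q t ≤ psum p t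

/-- Transpose (conjugate) partition: `transpose p i = #{j : p j ≥ i + 1}` (0-indexed). -/
noncomputable def transpose (p : ℕ → ℕ) (i : ℕ) : ℕ := Set.ncard {j | i < p j}

/-- Multiplicity of the part `m` in `p`. -/
noncomputable def partMult (p : ℕ → ℕ) (m : ℕ) : ℕ := Set.ncard {i | p i = m}

/-- Type B (and type D) condition: every (positive) even part occurs with even multiplicity. -/
def TypeBseq (p : ℕ → ℕ) : Prop := ∀ m, 0 < m → Even m → Even (partMult p m)

/-- Type C condition: every odd part occurs with even multiplicity. -/
def TypeCseq (p : ℕ → ℕ) : Prop := ∀ m, 0 < m → Odd m → Even (partMult p m)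

/-- Number of (nonzero) parts of `p`: least index after which `p` vanishes. -/
noncomputable def plen (p : ℕ → ℕ) : ℕ := sInf {N | ∀ i, N ≤ i → p i = 0}

/-- `p⁻`: subtract 1 from the smallest (last nonzero) part. -/
noncomputable def pminus (p : ℕ → ℕ) : ℕ → ℕ := fun i => if i + 1 = plen p then p i - 1 else p i

/-- `p⁺`: add 1 to the largest part. -/
def pplus (p : ℕ → ℕ) : ℕ → ℕ := fun i => if i = 0 then p i + 1 else p i

/-- Type D condition on parts is the same as type B: even parts occur with even multiplicity. -/
def TypeDseq (p : ℕ → ℕ) : Prop := ∀ m, 0 < m → Even m → Even (partMult p m)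

open Finset

lemma Dominates.trans {p q r : ℕ → ℕ} (hpq : Dominates p q) (hqr : Dominates q r) :
    Dominates p r :=
  fun t => (hqr t).trans (hpq t)

lemma transpose_eq_card_filter {p : ℕ → ℕ} {N : ℕ} (hN : ∀ j, N ≤ j → p j = 0) (i : ℕ) :
    transpose p i = #{j ∈ range N | i < p j} := by
  rw [transpose, ← Set.ncard_coe_finset]
  congr 1
  ext j
  simp only [Set.mem_ofPred_eq, coe_filter, mem_range, iff_and_self]
  intro hj
  by_contra! hNj
  simp [hN j hNj] at hj

lemma psum_transpose {p : ℕ → ℕ} {N : ℕ} (hN : ∀ j, N ≤ j → p j = 0) (t : ℕ) :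
    psum (transpose p) t = ∑ j ∈ range N, min (p j) t := by
  have hcol : ∀ j, #{i ∈ range t | i < p j} = min (p j) t := fun j => by
    rw [← card_range (min (p j) t)]
    congr 1
    ext i
    simp [and_comm]
  simp only [psum, transpose_eq_card_filter hN, card_filter]
  rw [sum_comm]
  simp only [← card_filter, hcol]

lemma sum_range_tsub_le_of_dominates {p q : ℕ → ℕ} (hq : Antitone q) {N : ℕ}
    (hqN : ∀ j, N ≤ j → q j = 0) (hdom : Dominates p q) (t : ℕ) :
    ∑ j ∈ range N, (q j - t) ≤ ∑ j ∈ range N, (p j - t) := by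
  have hex : ∃ m, q m ≤ t := ⟨N, by simp [hqN N le_rfl]⟩
  set m := Nat.find hex
  have hmN : m ≤ N := Nat.find_min' hex (by simp [hqN N le_rfl])
  have hq_gt : ∀ j < m, t < q j := fun j hj => not_le.mp (Nat.find_min hex hj)
  have hq_tail : ∀ j ∈ Ico m N, q j - t = 0 := fun j hj =>
    Nat.sub_eq_zero_of_le ((hq (mem_Ico.mp hj).1).trans (Nat.find_spec hex))
  have hq_sum : ∑ j ∈ range m, (q j - t) + m * t = psum q m := by
    rw [psum, show m * t = ∑ _j ∈ range m, t by simp, ← sum_add_distrib]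
    exact sum_congr rfl fun j hj => Nat.sub_add_cancel (hq_gt j (mem_range.mp hj)).le
  have hp_sum : psum p m ≤ ∑ j ∈ range m, (p j - t) + m * t := by
    rw [psum, show m * t = ∑ _j ∈ range m, t by simp, ← sum_add_distrib]
    exact sum_le_sum fun j _ => le_tsub_add
  calc ∑ j ∈ range N, (q j - t) = ∑ j ∈ range m, (q j - t) := by
        rw [← sum_range_add_sum_Ico _ hmN, sum_eq_zero hq_tail, add_zero]
    _ ≤ ∑ j ∈ range m, (p j - t) := by have := hdom m; omega
    _ ≤ ∑ j ∈ range N, (p j - t) := sum_le_sum_of_subset (range_subset_range.mpr hmN)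

lemma PartitionOf.sum_range_eq {n : ℕ} {p : ℕ → ℕ} (hp : PartitionOf n p) {N : ℕ}
    (hN : ∀ j, N ≤ j → p j = 0) : ∑ j ∈ range N, p j = n := by
  obtain ⟨-, M, hM, hsum⟩ := hp
  have hvanish : ∀ K ≤ max N M, (∀ j, K ≤ j → p j = 0) →
      ∑ j ∈ range K, p j = ∑ j ∈ range (max N M), p j := fun K hK hKp =>
    sum_subset (range_subset_range.mpr hK) fun j _ hj => hKp j (by simpa using hj)
  rw [hvanish N (le_max_left N M) hN, ← hvanish M (le_max_right N M) hM, hsum]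

lemma sum_range_min_add_sum_range_tsub (f : ℕ → ℕ) (N t : ℕ) :
    ∑ j ∈ range N, min (f j) t + ∑ j ∈ range N, (f j - t) = ∑ j ∈ range N, f j := by
  rw [← sum_add_distrib]
  exact sum_congr rfl fun j _ => by rw [add_comm, tsub_add_min]

theorem Dominates.transpose {n : ℕ} {p q : ℕ → ℕ} (hdom : Dominates p q)
    (hp : PartitionOf n p) (hq : PartitionOf n q) :
    Dominates (transpose q) (transpose p) := by
  obtain ⟨Np, hNp⟩ := hp.2.imp fun _ h => h.1
  obtain ⟨Nq, hNq⟩ := hq.2.imp fun _ h => h.1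
  have hpN : ∀ j, max Np Nq ≤ j → p j = 0 := fun j hj => hNp j (le_of_max_le_left hj)
  have hqN : ∀ j, max Np Nq ≤ j → q j = 0 := fun j hj => hNq j (le_of_max_le_right hj)
  intro t
  have hp_split := sum_range_min_add_sum_range_tsub p (max Np Nq) t
  have hq_split := sum_range_min_add_sum_range_tsub q (max Np Nq) t
  have htail := sum_range_tsub_le_of_dominates hq.1 hqN hdom t
  rw [hp.sum_range_eq hpN] at hp_split
  rw [hq.sum_range_eq hqN] at hq_split
  rw [psum_transpose hpN, psum_transpose hqN]
  omega

theorem stmt_12_general (n : ℕ) (p q : ℕ → ℕ)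
    (hp : PartitionOf (2 * n) p)
    (hq : PartitionOf (2 * n) q)
    (hdom : Dominates p q)
    (cp cq : ℕ → ℕ)
    (hcp : PartitionOf (2 * n) cp ∧ TypeDseq cp ∧ Dominates (transpose p) cp ∧
      ∀ c', PartitionOf (2 * n) c' → TypeDseq c' → Dominates (transpose p) c' → Dominates cp c')
    (hcq : PartitionOf (2 * n) cq ∧ TypeDseq cq ∧ Dominates (transpose q) cq ∧
      ∀ c', PartitionOf (2 * n) c' → TypeDseq c' → Dominates (transpose q) c' → Dominates cq c') :
    (PartitionOf (2 * n) cp ∧ TypeDseq cp) ∧ Dominates cq cp := by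
  obtain ⟨hcp_part, hcp_typeD, hcp_le, -⟩ := hcp
  refine ⟨⟨hcp_part, hcp_typeD⟩, hcq.2.2.2 cp hcp_part hcp_typeD ?_⟩
  exact (hdom.transpose hp hq).trans hcp_le

/-- for a type D partition `p` of `2n`, the Barbasch-Vogan dual
`d_BV(p) = (p*)_D` (D-collapse of the transpose) is a type D partition of `2n`; moreover
`d_BV` is order-reversing: if `p ≥ q` (both type D partitions of `2n`) then
`d_BV(p) ≤ d_BV(q)`. Here `cp` (resp. `cq`) is the D-collapse of `p*` (resp. `q*`):
the unique maximal type D partition of `2n` dominated by the transpose. -/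
theorem stmt_12 (n : ℕ) (p q : ℕ → ℕ)
    (hp : PartitionOf (2 * n) p) (hpD : TypeDseq p)
    (hq : PartitionOf (2 * n) q) (hqD : TypeDseq q)
    (hdom : Dominates p q)
    (cp cq : ℕ → ℕ)
    (hcp : PartitionOf (2 * n) cp ∧ TypeDseq cp ∧ Dominates (transpose p) cp ∧
      ∀ c', PartitionOf (2 * n) c' → TypeDseq c' → Dominates (transpose p) c' → Dominates cp c')
    (hcq : PartitionOf (2 * n) cq ∧ TypeDseq cq ∧ Dominates (transpose q) cq ∧
      ∀ c', PartitionOf (2 * n) c' → TypeDseq c' → Dominates (transpose q) c' → Dominates cq c') :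
    (PartitionOf (2 * n) cp ∧ TypeDseq cp) ∧ Dominates cq cp :=
  stmt_12_general n p q hp hq hdom cp cq hcp hcq
end

section
/- Let p and q be partitions of n with p ≥ q in the dominance order and suppose that for all t, the difference of partial sums (sum of first t parts of p) − (sum of first t parts of q) lies in {0, 1}. If moreover every part of p occurs with even multiplicity (i.e., p = p' ⊔ p' for some partition p' of n/2) and likewise q = q' ⊔ q' with p' ≥ q', then p = q. -/
/-!
Sorting `p' + p'` repeats every entry of the sorted `p'`, so the partial sums of `p` at even
indices are twice those of `p'`. Hence `0 ≤ 2 (S_{p'}(t) - S_{q'}(t)) ≤ 1`, which forces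
`S_{p'}(t) = S_{q'}(t)` for all `t`; a partition without zero parts is determined by its partial
sums, so `p' = q'`.
-/

section DoubleEach

variable {α : Type*}

def doubleEach (l : List α) : List α := l.flatMap fun a => [a, a]

@[simp]
lemma doubleEach_nil : doubleEach ([] : List α) = [] := rfl

@[simp]
lemma doubleEach_cons (a : α) (l : List α) : doubleEach (a :: l) = a :: a :: doubleEach l := rfl

@[simp]
lemma mem_doubleEach {x : α} {l : List α} : x ∈ doubleEach l ↔ x ∈ l := by
  simp [doubleEach]

lemma coe_doubleEach (l : List α) : (doubleEach l : Multiset α) = l + l := by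
  induction l with
  | nil => rfl
  | cons a l ih =>
    simp only [doubleEach_cons, ← Multiset.cons_coe, ih, Multiset.cons_add, Multiset.add_cons]

lemma pairwise_doubleEach {r : α → α → Prop} [Std.Refl r] {l : List α} (h : l.Pairwise r) :
    (doubleEach l).Pairwise r := by
  induction l with
  | nil => simp
  | cons a l ih =>
    rw [List.pairwise_cons] at h
    simp only [doubleEach_cons, List.pairwise_cons, List.mem_cons, mem_doubleEach]
    refine ⟨?_, fun b hb => h.1 b hb, ih h.2⟩
    rintro b (rfl | hb)
    exacts [refl b, h.1 b hb]

lemma reverse_doubleEach (l : List α) : (doubleEach l).reverse = doubleEach l.reverse := by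
  simp [doubleEach, List.reverse_flatMap, Function.comp_def]

lemma take_two_mul_doubleEach (l : List α) (t : ℕ) :
    (doubleEach l).take (2 * t) = doubleEach (l.take t) := by
  induction l generalizing t with
  | nil => simp
  | cons a l ih =>
    cases t with
    | zero => simp
    | succ t => simp [Nat.mul_succ, ih]

lemma sum_doubleEach [AddCommMonoid α] (l : List α) : (doubleEach l).sum = l.sum + l.sum := by
  rw [← Multiset.sum_coe, coe_doubleEach, Multiset.sum_add, Multiset.sum_coe]

lemma Multiset.sort_add_self [LinearOrder α] (M : Multiset α) :
    (M + M).sort (· ≤ ·) = doubleEach (M.sort (· ≤ ·)) :=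
  List.Perm.eq_of_pairwise' (Multiset.pairwise_sort _ _)
    (pairwise_doubleEach (Multiset.pairwise_sort _ _))
    (by rw [← Multiset.coe_eq_coe, Multiset.sort_eq, coe_doubleEach, Multiset.sort_eq])

end DoubleEach

lemma sumLargest_add_self_two_mul (M : Multiset ℕ) (t : ℕ) :
    sumLargest (M + M) (2 * t) = 2 * sumLargest M t := by
  rw [sumLargest, sumLargest, Multiset.sort_add_self, reverse_doubleEach,
    take_two_mul_doubleEach, sum_doubleEach, two_mul]

lemma List.eq_of_forall_take_sum_eq {l m : List ℕ} (hl : 0 ∉ l) (hm : 0 ∉ m)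
    (h : ∀ t, (l.take t).sum = (m.take t).sum) : l = m := by
  induction l generalizing m with
  | nil =>
    cases m with
    | nil => rfl
    | cons b m => exact absurd (by simpa using h 1) (List.ne_of_not_mem_cons hm)
  | cons a l ih =>
    cases m with
    | nil => exact absurd (by simpa using (h 1).symm) (List.ne_of_not_mem_cons hl)
    | cons b m =>
      have hab : a = b := by simpa using h 1
      subst hab
      congr 1
      refine ih (List.not_mem_of_not_mem_cons hl) (List.not_mem_of_not_mem_cons hm) fun t => ?_
      simpa using h (t + 1)

lemma eq_of_forall_sumLargest_eq {A B : Multiset ℕ} (hA : 0 ∉ A) (hB : 0 ∉ B)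
    (h : ∀ t, sumLargest A t = sumLargest B t) : A = B := by
  have hsort : A.sort (· ≤ ·) = B.sort (· ≤ ·) :=
    List.reverse_injective <| List.eq_of_forall_take_sum_eq (by simpa using hA)
      (by simpa using hB) h
  rw [← Multiset.sort_eq A (· ≤ ·), hsort, Multiset.sort_eq]

theorem stmt_16_general (p q p' q' : Multiset ℕ)
    (hp0 : 0 ∉ p) (hq0 : 0 ∉ q)
    (hpp : p = p' + p') (hqq : q = q' + q')
    (hdom' : Dom p' q')
    (hdiff : ∀ t, sumLargest p t ≤ sumLargest q t + 1) :
    p = q := by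
  subst hpp hqq
  have hsum : ∀ t, sumLargest p' t = sumLargest q' t := fun t => by
    have h := hdiff (2 * t)
    rw [sumLargest_add_self_two_mul, sumLargest_add_self_two_mul] at h
    have := hdom' t
    omega
  rw [eq_of_forall_sumLargest_eq (by simpa using hp0) (by simpa using hq0) hsum]

/-- if `p = p' ⊔ p'` and `q = q' ⊔ q'` are partitions of `n` (every part with
even multiplicity) with `p' ≥ q'`, `p ≥ q`, and every partial-sum difference of `p` over `q`
lies in `{0, 1}`, then `p = q`. -/
theorem stmt_16 (n : ℕ) (p q p' q' : Multiset ℕ)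
    (hp : p.sum = n) (hq : q.sum = n) (hp0 : 0 ∉ p) (hq0 : 0 ∉ q)
    (hpp : p = p' + p') (hqq : q = q' + q')
    (hdom' : Dom p' q')
    (hdom : Dom p q)
    (hdiff : ∀ t, sumLargest p t ≤ sumLargest q t + 1) :
    p = q :=
  stmt_16_general p q p' q' hp0 hq0 hpp hqq hdom' hdiff
end

section
/- Let d ≥ 2 and let p, q be partitions of n such that every part of p occurs with multiplicity divisible by d (p = p' ⊔ ... ⊔ p', d copies) and every part of q occurs with multiplicity divisible by d (q = q' ⊔ ... ⊔ q', d copies), with p' ≥ q' in the dominance order. If for all t, 0 ≤ (sum of first t parts of p) − (sum of first t parts of q) ≤ 1, then p = q. -/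
/-!
The sorted list of `d • s` repeats each entry of the sorted list of `s` exactly `d` times, so
the sum of the `d t` largest parts of `d • s` is `d` times the sum of the `t` largest parts
of `s`. At the index `d t` the gap between `p = d • p'` and `q = d • q'` is therefore `d` times
the gap between `p'` and `q'`, which is nonnegative by dominance; being at most `1` with
`d ≥ 2`, it vanishes. So `p'` and `q'` have the same partial sums, and a multiset without
zero parts is determined by its partial sums.
-/

theorem List.coe_flatMap_replicate {α : Type*} (d : ℕ) (l : List α) :
    ((l.flatMap (List.replicate d) : List α) : Multiset α) = d • (l : Multiset α) := by
  induction l with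
  | nil => simp
  | cons a l ih =>
    rw [List.flatMap_cons, ← Multiset.coe_add, ih, Multiset.coe_replicate, ← Multiset.cons_coe,
      ← Multiset.singleton_add, nsmul_add, Multiset.nsmul_singleton]

theorem List.Pairwise.flatMap_replicate {α : Type*} {r : α → α → Prop} [Std.Refl r] (d : ℕ)
    {l : List α} (h : l.Pairwise r) : (l.flatMap (List.replicate d)).Pairwise r :=
  List.pairwise_flatMap.2 ⟨fun _ _ => List.pairwise_replicate_of_refl,
    h.imp fun hab _ hx _ hy => List.eq_of_mem_replicate hx ▸ List.eq_of_mem_replicate hy ▸ hab⟩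

theorem List.sum_take_mul_flatMap_replicate {M : Type*} [AddCommMonoid M] (d : ℕ) (l : List M)
    (t : ℕ) : ((l.flatMap (List.replicate d)).take (d * t)).sum = d • (l.take t).sum := by
  induction l generalizing t with
  | nil => simp
  | cons a l ih =>
    cases t with
    | zero => simp
    | succ t =>
      have htake := List.take_length_add_append (l₁ := List.replicate d a)
        (l₂ := l.flatMap (List.replicate d)) (d * t)
      rw [List.length_replicate] at htake
      rw [List.flatMap_cons, Nat.mul_succ, add_comm, htake, List.sum_append, List.sum_replicate,
        ih, List.take_succ_cons, List.sum_cons, nsmul_add]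

theorem List.eq_of_forall_sum_take_eq {M : Type*} [AddLeftCancelMonoid M] :
    ∀ {l k : List M}, 0 ∉ l → 0 ∉ k → (∀ t, (l.take t).sum = (k.take t).sum) → l = k
  | [], [], _, _, _ => rfl
  | [], b :: k, _, hk, h => absurd (List.mem_cons.2 (Or.inl (by simpa using h 1))) hk
  | a :: l, [], hl, _, h => absurd (List.mem_cons.2 (Or.inl (by simpa using (h 1).symm))) hl
  | a :: l, b :: k, hl, hk, h => by
    obtain rfl : a = b := by simpa using h 1
    refine congrArg _ (List.eq_of_forall_sum_take_eq (List.not_mem_of_not_mem_cons hl)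
      (List.not_mem_of_not_mem_cons hk) fun t => add_left_cancel (a := a) ?_)
    simpa using h (t + 1)

theorem Multiset.sort_nsmul {α : Type*} [LinearOrder α] (d : ℕ) (s : Multiset α) :
    (d • s).sort = s.sort.flatMap (List.replicate d) :=
  List.Perm.eq_of_pairwise' (Multiset.pairwise_sort _ _)
    ((Multiset.pairwise_sort _ _).flatMap_replicate d) <| by
    rw [← Multiset.coe_eq_coe, Multiset.sort_eq, List.coe_flatMap_replicate, Multiset.sort_eq]

theorem sumLargest_nsmul (d : ℕ) (s : Multiset ℕ) (t : ℕ) :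
    sumLargest (d • s) (d * t) = d * sumLargest s t := by
  have hrev : List.reverse ∘ List.replicate d = (List.replicate d : ℕ → List ℕ) :=
    funext fun _ => List.reverse_replicate
  rw [sumLargest, Multiset.sort_nsmul, List.reverse_flatMap, hrev,
    List.sum_take_mul_flatMap_replicate, smul_eq_mul, sumLargest]

theorem eq_of_forall_sumLargest_eq_s17 {s s' : Multiset ℕ} (hs : 0 ∉ s) (hs' : 0 ∉ s')
    (h : ∀ t, sumLargest s t = sumLargest s' t) : s = s' := by
  have hsorted := List.eq_of_forall_sum_take_eq (by simpa using hs) (by simpa using hs') h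
  simpa using congrArg ((↑) : List ℕ → Multiset ℕ) hsorted

theorem stmt_17_general (d : ℕ) (hd : 2 ≤ d) (p q p' q' : Multiset ℕ)
    (hp0 : 0 ∉ p) (hq0 : 0 ∉ q)
    (hpp : p = d • p') (hqq : q = d • q')
    (hdom' : Dom p' q')
    (hdiff : ∀ t, sumLargest q t ≤ sumLargest p t ∧ sumLargest p t ≤ sumLargest q t + 1) :
    p = q := by
  subst hpp hqq
  have hd0 : d ≠ 0 := by omega
  have hsum : ∀ t, sumLargest p' t = sumLargest q' t := fun t => by
    have hgap := (hdiff (d * t)).2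
    rw [sumLargest_nsmul, sumLargest_nsmul] at hgap
    nlinarith [hdom' t]
  have hp'0 : 0 ∉ p' := fun h => hp0 (Multiset.mem_nsmul.2 ⟨hd0, h⟩)
  have hq'0 : 0 ∉ q' := fun h => hq0 (Multiset.mem_nsmul.2 ⟨hd0, h⟩)
  rw [eq_of_forall_sumLargest_eq_s17 hp'0 hq'0 hsum]

/-- let `d ≥ 2` and let `p, q` be partitions of `n` that are `d`-fold unions
`p = d • p'`, `q = d • q'` (every part occurs with multiplicity divisible by `d`), with
`p' ≥ q'` in the dominance order. If every partial-sum difference of `p` over `q` lies in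
`{0, 1}`, then `p = q`. -/
theorem stmt_17 (d n : ℕ) (hd : 2 ≤ d) (p q p' q' : Multiset ℕ)
    (hp : p.sum = n) (hq : q.sum = n) (hp0 : 0 ∉ p) (hq0 : 0 ∉ q)
    (hpp : p = d • p') (hqq : q = d • q')
    (hdom' : Dom p' q')
    (hdiff : ∀ t, sumLargest q t ≤ sumLargest p t ∧ sumLargest p t ≤ sumLargest q t + 1) :
    p = q :=
  stmt_17_general d hd p q p' q' hp0 hq0 hpp hqq hdom' hdiff
end
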